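/- arXiv:math/0508084 — 6 statements merged into one kernel-verified Lean document; each statement's English description precedes it below -/
import Mathlib

section
/- For every (p,q₁,q₂) ∈ C and every (z,w₁,w₂) ∈ C, the point A_{(p,q₁,q₂)}(z,w₁,w₂) again lies in C; i.e. the maps A_{(p,q₁,q₂)} with (p,q₁,q₂) ∈ C preserve the cubic model C. -/
open Complex

/-- The cubic model `C = {(z,w₁,w₂) ∈ ℂ³ : Im w₁ = |z|², Im w₂ = (Re z)·|z|²}`. -/
def cubicC : Set (ℂ × ℂ × ℂ) :=
  {p | p.2.1.im = Complex.normSq p.1 ∧ p.2.2.im = p.1.re * Complex.normSq p.1}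

/-- The polynomial map `A_{(p,q₁,q₂)} : ℂ³ → ℂ³`. -/
noncomputable def Amap (p : ℂ × ℂ × ℂ) (v : ℂ × ℂ × ℂ) : ℂ × ℂ × ℂ :=
  (v.1 + p.1,
   v.2.1 + p.2.1 + 2 * I * v.1 * (starRingEnd ℂ) p.1,
   v.2.2 + p.2.2 + I * (2 * (Complex.normSq p.1 : ℂ) + ((starRingEnd ℂ) p.1) ^ 2) * v.1
     + I * (starRingEnd ℂ) p.1 * v.1 ^ 2 + (p.1 + (starRingEnd ℂ) p.1) * v.2.1)

theorem stmt_1 :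
    ∀ p ∈ cubicC, ∀ v ∈ cubicC, Amap p v ∈ cubicC := by
  rintro ⟨p, q₁, q₂⟩ ⟨hp1, hp2⟩ ⟨z, w₁, w₂⟩ ⟨hz1, hz2⟩
  simp only [cubicC, Set.mem_setOf_eq, Amap] at *
  obtain ⟨a, b, rfl⟩ : ∃ a b : ℝ, p = ⟨a, b⟩ := ⟨p.re, p.im, rfl⟩
  obtain ⟨x, y, rfl⟩ : ∃ a b : ℝ, z = ⟨a, b⟩ := ⟨z.re, z.im, rfl⟩
  simp only [Complex.normSq_mk, Complex.add_im, Complex.mul_im, Complex.mul_re,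
    Complex.add_re, Complex.I_re, Complex.I_im, Complex.conj_re, Complex.conj_im,
    Complex.ofReal_re, Complex.ofReal_im, Complex.normSq_mk, pow_two] at *
  constructor <;> (simp [Complex.normSq_apply, hz1, hz2, hp1, hp2]; ring)
end

section
/- For all (p,q₁,q₂) ∈ C and (z,w₁,w₂) ∈ C, the composition A_{(p,q₁,q₂)} ∘ A_{(z,w₁,w₂)} equals A_{A_{(p,q₁,q₂)}(z,w₁,w₂)} as maps ℂ³ → ℂ³, and A_{(0,0,0)} is the identity map of ℂ³; hence the family {A_{(p,q₁,q₂)} : (p,q₁,q₂) ∈ C} defines a group action of a group with underlying set C on ℂ³. -/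
open Complex

theorem stmt_2 :
    (∀ p ∈ cubicC, ∀ v ∈ cubicC, Amap p ∘ Amap v = Amap (Amap p v)) ∧
    Amap (0, 0, 0) = id := by
  constructor
  · intro p _ v _
    funext u
    have h : ∀ x : ℂ, ((Complex.normSq x : ℝ) : ℂ) = x * (starRingEnd ℂ) x := fun x => (Complex.mul_conj x).symm
    simp only [Amap, Function.comp_apply, h, map_add]
    refine Prod.ext ?_ (Prod.ext ?_ ?_) <;> ring
  · funext v
    simp [Amap]
end

section
/- The maps A_{(p,q₁,q₂)} with (p,q₁,q₂) ∈ C act simply transitively on C: for any two points (z,w₁,w₂) ∈ C and (z',w₁',w₂') ∈ C there exists a unique (p,q₁,q₂) ∈ C such that A_{(p,q₁,q₂)}(z,w₁,w₂) = (z',w₁',w₂'). -/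
open Complex

/-- The maps `A_{(p,q₁,q₂)}`, `(p,q₁,q₂) ∈ C`, act simply transitively on `C`. -/
theorem stmt_3 :
    ∀ v ∈ cubicC, ∀ v' ∈ cubicC, ∃! p, p ∈ cubicC ∧ Amap p v = v' := by
  rintro ⟨z, w₁, w₂⟩ ⟨h1, h2⟩ ⟨z', w₁', w₂'⟩ ⟨h1', h2'⟩
  refine ⟨(z' - z,
      w₁' - w₁ - 2 * I * z * (starRingEnd ℂ) (z' - z),
      w₂' - w₂ - I * (2 * (Complex.normSq (z' - z) : ℂ) + ((starRingEnd ℂ) (z' - z)) ^ 2) * z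
        - I * (starRingEnd ℂ) (z' - z) * z ^ 2 - ((z' - z) + (starRingEnd ℂ) (z' - z)) * w₁),
    ⟨⟨?_, ?_⟩, ?_⟩, ?_⟩
  · simp only [map_sub, sub_im, mul_im, mul_re, I_re, I_im, conj_re, conj_im, sub_re,
      ofReal_re, ofReal_im, add_im, add_re, pow_two, normSq_apply, re_ofNat, im_ofNat] at *
    rw [h1, h1']
    ring
  · simp only [map_sub, sub_im, mul_im, mul_re, I_re, I_im, conj_re, conj_im, sub_re,
      ofReal_re, ofReal_im, add_im, add_re, pow_two, normSq_apply, re_ofNat, im_ofNat] at *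
    rw [h1, h2, h2']
    ring
  · simp only [Amap, Prod.mk.injEq]
    refine ⟨by ring, by ring, by ring⟩
  · rintro ⟨P, Q1, Q2⟩ ⟨hmem, heq⟩
    simp only [Amap, Prod.mk.injEq, map_sub] at heq
    obtain ⟨e1, e2, e3⟩ := heq
    have hP : P = z' - z := by linear_combination e1
    subst hP
    refine Prod.ext (by ring) (Prod.ext ?_ ?_)
    · simp only [map_sub] at *
      linear_combination e2
    · simp only [map_sub] at *
      linear_combination e3
end

section
/- For all (p,q₁,q₂) ∈ C and (z,w₁,w₂) ∈ C one has the matrix identity M(p,q₁,q₂) · M(z,w₁,w₂) = M(A_{(p,q₁,q₂)}(z,w₁,w₂)); i.e. the matrices M(z,w₁,w₂) with (z,w₁,w₂) ∈ C realize the maps A_{(p,q₁,q₂)} as a matrix group. -/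
open Complex

/-- The matrix `M(z,w₁,w₂)` realizing `A_{(z,w₁,w₂)}`. -/
noncomputable def Mmat (v : ℂ × ℂ × ℂ) : Matrix (Fin 5) (Fin 5) ℂ :=
  !![1, v.1 + (starRingEnd ℂ) v.1, I * (starRingEnd ℂ) v.1,
       2 * I * (Complex.normSq v.1 : ℂ) + I * ((starRingEnd ℂ) v.1) ^ 2, v.2.2;
     0, 1, 0, 2 * I * (starRingEnd ℂ) v.1, v.2.1;
     0, 0, 1, 2 * v.1, v.1 ^ 2;
     0, 0, 0, 1, v.1;
     0, 0, 0, 0, 1]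

theorem stmt_5 :
    ∀ p ∈ cubicC, ∀ v ∈ cubicC, Mmat p * Mmat v = Mmat (Amap p v) := by
  intro p _ v _
  ext i j
  fin_cases i <;> fin_cases j <;>
    simp [Mmat, Amap, Matrix.mul_apply, Fin.sum_univ_five, Matrix.vecHead, Matrix.vecTail,
      ← Complex.mul_conj] <;> ring
end

section
/- Let E and F be real normed spaces, U ⊆ E open, θ : U → (E →L F) a smooth (operator-valued) 1-form, and X, Y : U → E smooth vector fields such that θ(x)(X(x)) = 0 and θ(x)(Y(x)) = 0 for all x ∈ U. Then for every a ∈ U, θ(a)([X,Y](a)) = (Dθ)(a)(Y(a))(X(a)) − (Dθ)(a)(X(a))(Y(a)). In particular the value θ(a)([X,Y](a)) depends only on the derivative of θ at a and on the values X(a), Y(a). -/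
/-- If a smooth operator-valued 1-form `θ` annihilates the smooth vector fields `X` and `Y`
on an open set `U`, then `θ(a)([X,Y](a)) = Dθ(a)(Y(a))(X(a)) − Dθ(a)(X(a))(Y(a))`
for every `a ∈ U`. -/
theorem stmt_14 {E F : Type*} [NormedAddCommGroup E] [NormedSpace ℝ E]
    [NormedAddCommGroup F] [NormedSpace ℝ F]
    {U : Set E} (hU : IsOpen U)
    (θ : E → (E →L[ℝ] F)) (hθ : ContDiffOn ℝ (⊤ : ℕ∞) θ U)
    (X Y : E → E) (hX : ContDiffOn ℝ (⊤ : ℕ∞) X U) (hY : ContDiffOn ℝ (⊤ : ℕ∞) Y U)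
    (hθX : ∀ x ∈ U, θ x (X x) = 0) (hθY : ∀ x ∈ U, θ x (Y x) = 0) :
    ∀ a ∈ U, θ a (VectorField.lieBracket ℝ X Y a) =
      fderiv ℝ θ a (Y a) (X a) - fderiv ℝ θ a (X a) (Y a) := by
  intro a ha
  have hna := hU.mem_nhds ha
  have hθa : DifferentiableAt ℝ θ a :=
    (hθ.differentiableOn (by simp)).differentiableAt hna
  have hXa : DifferentiableAt ℝ X a :=
    (hX.differentiableOn (by simp)).differentiableAt hna
  have hYa : DifferentiableAt ℝ Y a :=
    (hY.differentiableOn (by simp)).differentiableAt hna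
  have key : ∀ (Z : E → E), DifferentiableAt ℝ Z a → (∀ x ∈ U, θ x (Z x) = 0) →
      ∀ v : E, θ a (fderiv ℝ Z a v) = - fderiv ℝ θ a v (Z a) := by
    intro Z hZa hZ v
    have heq : (fun x => θ x (Z x)) =ᶠ[nhds a] fun _ => (0 : F) :=
      Filter.eventually_of_mem hna fun x hx => hZ x hx
    have h0 : fderiv ℝ (fun x => θ x (Z x)) a = 0 := by
      rw [Filter.EventuallyEq.fderiv_eq heq, fderiv_fun_const]
      rfl
    have h1 := fderiv_clm_apply hθa hZa
    rw [h0] at h1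
    have := congrArg (fun L : E →L[ℝ] F => L v) h1.symm
    simp only [ContinuousLinearMap.add_apply, ContinuousLinearMap.coe_comp',
      Function.comp_apply, ContinuousLinearMap.flip_apply,
      ContinuousLinearMap.zero_apply] at this
    rw [eq_neg_iff_add_eq_zero]; exact this
  have kX := key X hXa hθX (Y a)
  have kY := key Y hYa hθY (X a)
  rw [VectorField.lieBracket, map_sub, kX, kY]
  abel
end

section
/- Let E and F be real normed spaces, U ⊆ E open, θ : U → (E →L F) a smooth (operator-valued) 1-form, and X, Y, X', Y' : U → E smooth vector fields such that θ(x)(X(x)) = 0, θ(x)(Y(x)) = 0, θ(x)(X'(x)) = 0 and θ(x)(Y'(x)) = 0 for all x ∈ U. If a ∈ U satisfies X(a) = X'(a) and Y(a) = Y'(a), then θ(a)([X,Y](a)) = θ(a)([X',Y'](a)); i.e. the algebraic Levi bracket (X(a),Y(a)) ↦ θ(a)([X,Y](a)) is well defined, depending only on the values of the vector fields at a. -/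
private lemma key_lem {E F : Type*} [NormedAddCommGroup E] [NormedSpace ℝ E]
    [NormedAddCommGroup F] [NormedSpace ℝ F]
    {U : Set E} (hU : IsOpen U)
    (θ : E → (E →L[ℝ] F)) (hθ : ContDiffOn ℝ (⊤ : ℕ∞) θ U)
    (Z : E → E) (hZ : ContDiffOn ℝ (⊤ : ℕ∞) Z U)
    (hθZ : ∀ x ∈ U, θ x (Z x) = 0)
    (a : E) (ha : a ∈ U) (v : E) :
    θ a (fderiv ℝ Z a v) = - (fderiv ℝ θ a v) (Z a) := by
  have hθa : DifferentiableAt ℝ θ a :=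
    ((hθ.contDiffAt (hU.mem_nhds ha)).differentiableAt (by simp))
  have hZa : DifferentiableAt ℝ Z a :=
    ((hZ.contDiffAt (hU.mem_nhds ha)).differentiableAt (by simp))
  have hcomb : HasFDerivAt (fun x => θ x (Z x))
      ((θ a).comp (fderiv ℝ Z a) + (fderiv ℝ θ a).flip (Z a)) a :=
    hθa.hasFDerivAt.clm_apply hZa.hasFDerivAt
  have heq : (fun x => θ x (Z x)) =ᶠ[nhds a] (fun _ => (0 : F)) :=
    Filter.eventually_of_mem (hU.mem_nhds ha) hθZ
  have h0 : HasFDerivAt (fun x => θ x (Z x)) (0 : E →L[ℝ] F) a := by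
    exact (hasFDerivAt_const (𝕜 := ℝ) (0 : F) a).congr_of_eventuallyEq heq
  have := h0.unique hcomb
  have h2 := congrArg (fun L : E →L[ℝ] F => L v) this.symm
  simp only [ContinuousLinearMap.add_apply, ContinuousLinearMap.comp_apply,
    ContinuousLinearMap.flip_apply, ContinuousLinearMap.zero_apply] at h2
  exact eq_neg_of_add_eq_zero_left h2
  
/-- If a smooth operator-valued 1-form `θ` annihilates the smooth vector fields
`X, Y, X', Y'` on an open set `U`, and `X(a) = X'(a)`, `Y(a) = Y'(a)` at some `a ∈ U`,
then `θ(a)([X,Y](a)) = θ(a)([X',Y'](a))`: the algebraic Levi bracket is well defined. -/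
theorem stmt_15 {E F : Type*} [NormedAddCommGroup E] [NormedSpace ℝ E]
    [NormedAddCommGroup F] [NormedSpace ℝ F]
    {U : Set E} (hU : IsOpen U)
    (θ : E → (E →L[ℝ] F)) (hθ : ContDiffOn ℝ (⊤ : ℕ∞) θ U)
    (X Y X' Y' : E → E)
    (hX : ContDiffOn ℝ (⊤ : ℕ∞) X U) (hY : ContDiffOn ℝ (⊤ : ℕ∞) Y U)
    (hX' : ContDiffOn ℝ (⊤ : ℕ∞) X' U) (hY' : ContDiffOn ℝ (⊤ : ℕ∞) Y' U)
    (hθX : ∀ x ∈ U, θ x (X x) = 0) (hθY : ∀ x ∈ U, θ x (Y x) = 0)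
    (hθX' : ∀ x ∈ U, θ x (X' x) = 0) (hθY' : ∀ x ∈ U, θ x (Y' x) = 0)
    (a : E) (ha : a ∈ U) (haX : X a = X' a) (haY : Y a = Y' a) :
    θ a (VectorField.lieBracket ℝ X Y a) = θ a (VectorField.lieBracket ℝ X' Y' a) := by
  simp only [VectorField.lieBracket, map_sub]
  rw [key_lem hU θ hθ Y hY hθY a ha (X a), key_lem hU θ hθ X hX hθX a ha (Y a),
      key_lem hU θ hθ Y' hY' hθY' a ha (X' a), key_lem hU θ hθ X' hX' hθX' a ha (Y' a),
      haX, haY]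
end
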